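/- Let M be a manifold with closed 2-form ω, ε a vector field with L_ε ω = n·ω, and v a vector field with L_v ω = 0 and [ε,v] = m·v for m + n ≠ 0. Then ι_v ω is exact; specifically ι_v ω = ± d((1/(m+n)) ι_v ι_ε ω). In particular v is a Hamiltonian vector field. -/
import Mathlib


/-- Let `ω` be a closed 2-form, `ε` a vector field with `L_ε ω = n·ω`, and
`v` a vector field with `L_v ω = 0` and `[ε,v] = m·v`, where `m + n ≠ 0`.  Then `ι_v ω`
is exact: `ι_v ω = ± d((1/(m+n)) ι_v ι_ε ω)`; in particular `v` is Hamiltonian.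
(The Cartan calculus is encoded abstractly: `Ω k` = `k`-forms, `d` = exterior derivative,
`ιε`/`ιv` = contractions with `ε`/`v`; Lie derivatives are given by Cartan's formula,
the degree conditions translate to `L_ε ω = nω` and, via `ι_{[ε,v]} = [L_ε, ι_v]`,
`[ε,v] = m·v` gives `[L_ε, ι_v] ω = m·ι_v ω`; `ι_ε ι_v = -ι_v ι_ε`.) -/
theorem stmt13 (Ω : ℕ → Type*) [∀ k, AddCommGroup (Ω k)] [∀ k, Module ℝ (Ω k)]
    (d : ∀ k, Ω k →ₗ[ℝ] Ω (k + 1))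
    (ιε : ∀ k, Ω (k + 1) →ₗ[ℝ] Ω k)   -- contraction with ε
    (ιv : ∀ k, Ω (k + 1) →ₗ[ℝ] Ω k)   -- contraction with v
    (ω : Ω 2) (hclosed : d 2 ω = 0)
    (n m : ℤ) (hmn : m + n ≠ 0)
    -- L_ε ω = n·ω  (Cartan's formula):
    (hLε : d 1 (ιε 1 ω) + ιε 2 (d 2 ω) = (n : ℝ) • ω)
    -- L_v ω = 0  (Cartan's formula):
    (hLv : d 1 (ιv 1 ω) + ιv 2 (d 2 ω) = 0)
    -- [L_ε, ι_v] ω = ι_{[ε,v]} ω = m·ι_v ω: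
    (hcomm : (d 0 (ιε 0 (ιv 1 ω)) + ιε 1 (d 1 (ιv 1 ω)))
        - ιv 1 (d 1 (ιε 1 ω) + ιε 2 (d 2 ω)) = (m : ℝ) • ιv 1 ω)
    -- ι_ε ι_v ω = - ι_v ι_ε ω:
    (hanti : ιε 0 (ιv 1 ω) = - ιv 0 (ιε 1 ω)) :
    (∃ s : ℝ, (s = 1 ∨ s = -1) ∧
      ιv 1 ω = s • d 0 ((((m + n : ℤ) : ℝ))⁻¹ • ιv 0 (ιε 1 ω))) ∧
    (∃ f : Ω 0, ιv 1 ω = d 0 f) := by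
  have hdv : d 1 (ιv 1 ω) = 0 := by
    have := hLv
    rw [hclosed, map_zero, add_zero] at this
    exact this
  have key : ((m + n : ℤ) : ℝ) • ιv 1 ω = - d 0 (ιv 0 (ιε 1 ω)) := by
    have h1 : d 0 (ιε 0 (ιv 1 ω)) - (n : ℝ) • ιv 1 ω = (m : ℝ) • ιv 1 ω := by
      rw [← hcomm, hLε, hdv, map_zero, add_zero, map_smul]
    rw [hanti, map_neg] at h1
    push_cast
    linear_combination (norm := module) -h1
  have hne : ((m + n : ℤ) : ℝ) ≠ 0 := by exact_mod_cast hmn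
  have main : ιv 1 ω = (-1 : ℝ) • d 0 ((((m + n : ℤ) : ℝ))⁻¹ • ιv 0 (ιε 1 ω)) := by
    rw [map_smul]
    rw [smul_smul]
    have := congrArg (fun x => (((m + n : ℤ) : ℝ))⁻¹ • x) key
    simp only [smul_smul, inv_mul_cancel₀ hne, one_smul, smul_neg] at this
    rw [this]
    module
  exact ⟨⟨-1, Or.inr rfl, main⟩, ⟨(-((((m + n : ℤ) : ℝ))⁻¹)) • ιv 0 (ιε 1 ω), by
    rw [map_smul]; rw [main, map_smul]; module⟩⟩
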